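/- Let (μ,σ) be an SDE on an open set M ⊆ ℝⁿ and let V₁ = (Y₁,C₁,τ₁,H₁) and V₂ = (Y₂,C₂,τ₂,H₂) be infinitesimal symmetries of (μ,σ), i.e. each satisfies the determining equations Y_i(μ) − L(Y_i) − σ·H_i + τ_iμ = 0 and [Y_i,σ] + ½τ_iσ + σ·C_i = 0. Then the bracket [V₁,V₂] = ([Y₁,Y₂], Y₁(C₂) − Y₂(C₁) − (C₁C₂ − C₂C₁), Y₁(τ₂) − Y₂(τ₁), Y₁(H₂) − Y₂(H₁) − (−τ₁/2 + C₁)·H₂ + (−τ₂/2 + C₂)·H₁) is again an infinitesimal symmetry of (μ,σ), i.e. it satisfies both determining equations (in particular its second component is antisymmetric-matrix valued). -/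

import Mathlib

open Matrix

/-- Partial derivative `∂ᵢ f` of a scalar function on `ℝⁿ`. -/
noncomputable def pd {n : ℕ} (i : Fin n) (f : (Fin n → ℝ) → ℝ) (x : Fin n → ℝ) : ℝ :=
  fderiv ℝ f x (Pi.single i 1)

/-- Action `Y(f) = Yⁱ ∂ᵢ f` of a vector field on a scalar function. -/
noncomputable def vfd {n : ℕ} (Y : (Fin n → ℝ) → Fin n → ℝ)
    (f : (Fin n → ℝ) → ℝ) (x : Fin n → ℝ) : ℝ :=
  ∑ j, Y x j * pd j f x

/-- Infinitesimal generator `L(f) = ½ (σσᵀ)^{ij} ∂ᵢ∂ⱼ f + μⁱ ∂ᵢ f` of the SDE `(μ,σ)`. -/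
noncomputable def gen {n m : ℕ} (μ : (Fin n → ℝ) → Fin n → ℝ)
    (σ : (Fin n → ℝ) → Matrix (Fin n) (Fin m) ℝ)
    (f : (Fin n → ℝ) → ℝ) (x : Fin n → ℝ) : ℝ :=
  (1 / 2) * ∑ i, ∑ j, (∑ α, σ x i α * σ x j α) * pd i (pd j f) x
    + ∑ i, μ x i * pd i f x

/-- Entrywise smoothness of a vector-valued function on a set. -/
def SmoothVec {n k : ℕ} (M : Set (Fin n → ℝ)) (f : (Fin n → ℝ) → Fin k → ℝ) : Prop :=
  ∀ i, ContDiffOn ℝ (⊤ : ℕ∞) (fun x => f x i) M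

/-- Entrywise smoothness of a matrix-valued function on a set. -/
def SmoothMat {n k l : ℕ} (M : Set (Fin n → ℝ))
    (f : (Fin n → ℝ) → Matrix (Fin k) (Fin l) ℝ) : Prop :=
  ∀ i j, ContDiffOn ℝ (⊤ : ℕ∞) (fun x => f x i j) M

/-- The determining equations: `V = (Y,C,τ,H)` is an infinitesimal symmetry of the SDE
`(μ,σ)` on `M`, i.e. `Y(μ) − L(Y) − σ·H + τμ = 0` and `[Y,σ] + ½τσ + σ·C = 0` on `M`. -/
def DetEqs {n m : ℕ} (M : Set (Fin n → ℝ))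
    (μ : (Fin n → ℝ) → Fin n → ℝ) (σ : (Fin n → ℝ) → Matrix (Fin n) (Fin m) ℝ)
    (Y : (Fin n → ℝ) → Fin n → ℝ) (C : (Fin n → ℝ) → Matrix (Fin m) (Fin m) ℝ)
    (τ : (Fin n → ℝ) → ℝ) (H : (Fin n → ℝ) → Fin m → ℝ) : Prop :=
  (∀ x ∈ M, ∀ i, vfd Y (fun y => μ y i) x - gen μ σ (fun y => Y y i) x
      - (∑ α, σ x i α * H x α) + τ x * μ x i = 0) ∧
  (∀ x ∈ M, ∀ i, ∀ α, vfd Y (fun y => σ y i α) x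
      - (∑ j, σ x j α * pd j (fun y => Y y i) x)
      + (1 / 2) * τ x * σ x i α + (∑ β, σ x i β * C x β α) = 0)

/-- First component (`Y`-part) of the bracket of two infinitesimal stochastic
transformations: `[Y₁,Y₂]`. -/
noncomputable def brY {n : ℕ} (Y₁ Y₂ : (Fin n → ℝ) → Fin n → ℝ) (x : Fin n → ℝ) :
    Fin n → ℝ := fun i =>
  vfd Y₁ (fun y => Y₂ y i) x - vfd Y₂ (fun y => Y₁ y i) x

/-- Second component (`C`-part) of the bracket: `Y₁(C₂) − Y₂(C₁) − (C₁C₂ − C₂C₁)`. -/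
noncomputable def brC {n m : ℕ} (Y₁ Y₂ : (Fin n → ℝ) → Fin n → ℝ)
    (C₁ C₂ : (Fin n → ℝ) → Matrix (Fin m) (Fin m) ℝ) (x : Fin n → ℝ) :
    Matrix (Fin m) (Fin m) ℝ :=
  Matrix.of fun a b =>
    vfd Y₁ (fun y => C₂ y a b) x - vfd Y₂ (fun y => C₁ y a b) x
      - ((C₁ x * C₂ x) a b - (C₂ x * C₁ x) a b)

/-- Third component (`τ`-part) of the bracket: `Y₁(τ₂) − Y₂(τ₁)`. -/
noncomputable def brTau {n : ℕ} (Y₁ Y₂ : (Fin n → ℝ) → Fin n → ℝ)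
    (τ₁ τ₂ : (Fin n → ℝ) → ℝ) (x : Fin n → ℝ) : ℝ :=
  vfd Y₁ τ₂ x - vfd Y₂ τ₁ x

/-- Fourth component (`H`-part) of the bracket:
`Y₁(H₂) − Y₂(H₁) − (−τ₁/2 + C₁)·H₂ + (−τ₂/2 + C₂)·H₁`. -/
noncomputable def brH {n m : ℕ} (Y₁ Y₂ : (Fin n → ℝ) → Fin n → ℝ)
    (C₁ C₂ : (Fin n → ℝ) → Matrix (Fin m) (Fin m) ℝ)
    (τ₁ τ₂ : (Fin n → ℝ) → ℝ)
    (H₁ H₂ : (Fin n → ℝ) → Fin m → ℝ) (x : Fin n → ℝ) : Fin m → ℝ := fun a =>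
  vfd Y₁ (fun y => H₂ y a) x - vfd Y₂ (fun y => H₁ y a) x
    - ((-(τ₁ x) / 2) * H₂ x a + ∑ b, C₁ x a b * H₂ x b)
    + ((-(τ₂ x) / 2) * H₁ x a + ∑ b, C₂ x a b * H₁ x b)


-- ===== toolkit =====

lemma cast1 : (1 : WithTop ℕ∞) ≤ ((⊤:ℕ∞) : WithTop ℕ∞) := by exact_mod_cast le_top
lemma cast2 : ((⊤:ℕ∞) : WithTop ℕ∞) + 1 ≤ ((⊤:ℕ∞) : WithTop ℕ∞) := by
  have : ((⊤:ℕ∞) : WithTop ℕ∞) + 1 = ((⊤+1 : ℕ∞) : WithTop ℕ∞) := by push_cast; ring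
  rw [this]; exact_mod_cast le_top
lemma cast3 : (2 : WithTop ℕ∞) ≤ ((⊤:ℕ∞) : WithTop ℕ∞) := by
  have : ((2:ℕ∞) : WithTop ℕ∞) = (2 : WithTop ℕ∞) := by norm_cast
  rw [← this]; exact_mod_cast le_top

variable {n m : ℕ} {M : Set (Fin n → ℝ)} {f g : (Fin n → ℝ) → ℝ} {x : Fin n → ℝ}

/-- smoothness on M -/
def Sm (M : Set (Fin n → ℝ)) (f : (Fin n → ℝ) → ℝ) : Prop := ContDiffOn ℝ (⊤:ℕ∞) f M

lemma Sm.diffAt (h : Sm M f) (hM : IsOpen M) (hx : x ∈ M) : DifferentiableAt ℝ f x :=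
  (h.contDiffAt (hM.mem_nhds hx)).differentiableAt (by simp)

lemma Sm.pd (h : Sm M f) (hM : IsOpen M) (i : Fin n) : Sm M (pd i f) :=
  (ContDiffOn.fderiv_of_isOpen h hM cast2).clm_apply contDiffOn_const

lemma Sm.mul (hf : Sm M f) (hg : Sm M g) : Sm M (fun y => f y * g y) := ContDiffOn.mul hf hg
lemma Sm.add (hf : Sm M f) (hg : Sm M g) : Sm M (fun y => f y + g y) := ContDiffOn.add hf hg
lemma Sm.sub (hf : Sm M f) (hg : Sm M g) : Sm M (fun y => f y - g y) := ContDiffOn.sub hf hg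
lemma Sm.constMul (c : ℝ) (hf : Sm M f) : Sm M (fun y => c * f y) := contDiffOn_const.mul hf
lemma Sm.sum {ι : Type*} (s : Finset ι) (F : ι → (Fin n → ℝ) → ℝ) (h : ∀ j ∈ s, Sm M (F j)) :
    Sm M (fun y => ∑ j ∈ s, F j y) := ContDiffOn.sum h
lemma Sm.vfd {Y : (Fin n → ℝ) → Fin n → ℝ} (hY : ∀ i, Sm M (fun y => Y y i))
    (hf : Sm M f) (hM : IsOpen M) : Sm M (vfd Y f) :=
  Sm.sum _ _ (fun j _ => (hY j).mul (hf.pd hM j))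

lemma pd_congr (hM : IsOpen M) (hx : x ∈ M) (h : ∀ z ∈ M, f z = g z) (i : Fin n) :
    pd i f x = pd i g x := by
  unfold pd
  rw [Filter.EventuallyEq.fderiv_eq (Filter.eventually_of_mem (hM.mem_nhds hx) h)]

lemma pd_add (hf : DifferentiableAt ℝ f x) (hg : DifferentiableAt ℝ g x) (i : Fin n) :
    pd i (fun y => f y + g y) x = pd i f x + pd i g x := by
  unfold pd; rw [fderiv_fun_add hf hg]; simp

lemma pd_sub (hf : DifferentiableAt ℝ f x) (hg : DifferentiableAt ℝ g x) (i : Fin n) :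
    pd i (fun y => f y - g y) x = pd i f x - pd i g x := by
  unfold pd; rw [fderiv_fun_sub hf hg]; simp

lemma pd_mul (hf : DifferentiableAt ℝ f x) (hg : DifferentiableAt ℝ g x) (i : Fin n) :
    pd i (fun y => f y * g y) x = f x * pd i g x + g x * pd i f x := by
  unfold pd; rw [fderiv_fun_mul hf hg]; simp

lemma pd_const_mul (c : ℝ) (hf : DifferentiableAt ℝ f x) (i : Fin n) :
    pd i (fun y => c * f y) x = c * pd i f x := by
  unfold pd; rw [fderiv_const_mul hf]; simp

lemma pd_sum {ι : Type*} (s : Finset ι) (F : ι → (Fin n → ℝ) → ℝ)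
    (h : ∀ j ∈ s, DifferentiableAt ℝ (F j) x) (i : Fin n) :
    pd i (fun y => ∑ j ∈ s, F j y) x = ∑ j ∈ s, pd i (F j) x := by
  unfold pd; rw [fderiv_fun_sum h]; simp

lemma pd_comm (hM : IsOpen M) (h : Sm M f) (hx : x ∈ M) (p q : Fin n) :
    pd p (pd q f) x = pd q (pd p f) x := by
  have hat : ContDiffAt ℝ ((⊤:ℕ∞):WithTop ℕ∞) f x := h.contDiffAt (hM.mem_nhds hx)
  have hs := hat.isSymmSndFDerivAt (by rw [minSmoothness_of_isRCLikeNormedField]; exact cast3)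
  have hd : DifferentiableAt ℝ (fderiv ℝ f) x :=
    (hat.fderiv_right cast2).differentiableAt (by simp)
  unfold pd
  rw [fderiv_clm_apply hd (differentiableAt_const _),
    fderiv_clm_apply hd (differentiableAt_const _)]
  simp [hs (Pi.single p 1) (Pi.single q 1)]

lemma pd_comm3 (hM : IsOpen M) (h : Sm M f) (hx : x ∈ M) (k p q : Fin n) :
    pd k (pd p (pd q f)) x = pd p (pd q (pd k f)) x := by
  rw [pd_comm hM (h.pd hM q) hx k p]
  exact pd_congr hM hx (fun z hz => pd_comm hM h hz k q) p

lemma pd_neg (i : Fin n) : pd i (fun y => -f y) x = -pd i f x := by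
  unfold pd; rw [fderiv_fun_neg]; simp

-- vfd rules
lemma vfd_neg {Y : (Fin n → ℝ) → Fin n → ℝ} :
    vfd Y (fun y => -f y) x = -vfd Y f x := by
  unfold vfd
  rw [← Finset.sum_neg_distrib]
  exact Finset.sum_congr rfl fun j _ => by rw [pd_neg]; ring

lemma vfd_congr {Y : (Fin n → ℝ) → Fin n → ℝ} (hM : IsOpen M) (hx : x ∈ M)
    (h : ∀ z ∈ M, f z = g z) : vfd Y f x = vfd Y g x := by
  unfold vfd; exact Finset.sum_congr rfl (fun j _ => by rw [pd_congr hM hx h])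

lemma vfd_add {Y : (Fin n → ℝ) → Fin n → ℝ} (hf : DifferentiableAt ℝ f x)
    (hg : DifferentiableAt ℝ g x) :
    vfd Y (fun y => f y + g y) x = vfd Y f x + vfd Y g x := by
  unfold vfd; rw [← Finset.sum_add_distrib]
  exact Finset.sum_congr rfl (fun j _ => by rw [pd_add hf hg]; ring)

lemma vfd_sub {Y : (Fin n → ℝ) → Fin n → ℝ} (hf : DifferentiableAt ℝ f x)
    (hg : DifferentiableAt ℝ g x) :
    vfd Y (fun y => f y - g y) x = vfd Y f x - vfd Y g x := by
  unfold vfd; rw [← Finset.sum_sub_distrib]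
  exact Finset.sum_congr rfl (fun j _ => by rw [pd_sub hf hg]; ring)

lemma vfd_mul {Y : (Fin n → ℝ) → Fin n → ℝ} (hf : DifferentiableAt ℝ f x)
    (hg : DifferentiableAt ℝ g x) :
    vfd Y (fun y => f y * g y) x = f x * vfd Y g x + g x * vfd Y f x := by
  unfold vfd; rw [Finset.mul_sum, Finset.mul_sum, ← Finset.sum_add_distrib]
  exact Finset.sum_congr rfl (fun j _ => by rw [pd_mul hf hg]; ring)

lemma vfd_const_mul {Y : (Fin n → ℝ) → Fin n → ℝ} (c : ℝ) (hf : DifferentiableAt ℝ f x) :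
    vfd Y (fun y => c * f y) x = c * vfd Y f x := by
  unfold vfd; rw [Finset.mul_sum]
  exact Finset.sum_congr rfl (fun j _ => by rw [pd_const_mul c hf]; ring)

lemma vfd_sum {Y : (Fin n → ℝ) → Fin n → ℝ} {ι : Type*} (s : Finset ι)
    (F : ι → (Fin n → ℝ) → ℝ) (h : ∀ j ∈ s, DifferentiableAt ℝ (F j) x) :
    vfd Y (fun y => ∑ j ∈ s, F j y) x = ∑ j ∈ s, vfd Y (F j) x := by
  unfold vfd
  rw [Finset.sum_comm]
  exact Finset.sum_congr rfl (fun j hj => by rw [pd_sum s F h, Finset.mul_sum])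

-- ===== core algebra =====



lemma rot3 {A B C : Type*} [Fintype A] [Fintype B] [Fintype C] (h : A → B → C → ℝ) :
    ∑ a, ∑ b, ∑ c, h a b c = ∑ b, ∑ c, ∑ a, h a b c := by
  rw [Finset.sum_comm]
  exact Finset.sum_congr rfl fun b _ => Finset.sum_comm

lemma rot3' {A B C : Type*} [Fintype A] [Fintype B] [Fintype C] (h : A → B → C → ℝ) :
    ∑ a, ∑ b, ∑ c, h a b c = ∑ c, ∑ a, ∑ b, h a b c := by
  rw [← rot3 (fun c a b => h a b c)]

set_option maxHeartbeats 2000000 in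
lemma alg1 {n m : ℕ} (S : Fin n → Fin m → ℝ) (a : Fin n → Fin n → ℝ)
    (A B Mu : Fin n → ℝ) (E₁ E₂ : Fin n → Fin n → ℝ)
    (DD₁ DD₂ : Fin n → Fin n → Fin n → ℝ) (T₁ T₂ : Fin n → Fin n → Fin n → ℝ)
    (C₁ C₂ : Fin m → Fin m → ℝ) (Hh₁ Hh₂ vH₁ vH₂ : Fin m → ℝ)
    (vσ₁ vσ₂ : Fin n → Fin m → ℝ) (vμ₁ vμ₂ vP₁ vP₂ : Fin n → ℝ)
    (vPP₁ vPP₂ : Fin n → Fin n → ℝ) (t₁ t₂ vT₁ vT₂ : ℝ) (i : Fin n)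
    (ha : ∀ p q, a p q = ∑ α, S p α * S q α)
    (hvσ₁ : ∀ q γ, vσ₁ q γ = (∑ j, S j γ * E₁ j q) - 1/2*(t₁ * S q γ) - ∑ β, S q β * C₁ β γ)
    (hvσ₂ : ∀ q γ, vσ₂ q γ = (∑ j, S j γ * E₂ j q) - 1/2*(t₂ * S q γ) - ∑ β, S q β * C₂ β γ)
    (hvμ₁ : ∀ p, vμ₁ p = ((1/2 * ∑ u, ∑ v, a u v * DD₁ u v p + ∑ u, Mu u * E₁ u p)
        + ∑ α, S p α * Hh₁ α) - t₁ * Mu p)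
    (hvμ₂ : ∀ p, vμ₂ p = ((1/2 * ∑ u, ∑ v, a u v * DD₂ u v p + ∑ u, Mu u * E₂ u p)
        + ∑ α, S p α * Hh₂ α) - t₂ * Mu p)
    (hvP₁ : ∀ p, vP₁ p = ∑ k, B k * DD₁ p k i)
    (hvP₂ : ∀ p, vP₂ p = ∑ k, A k * DD₂ p k i)
    (hvPP₁ : ∀ p q, vPP₁ p q = ∑ k, B k * T₁ p q k)
    (hvPP₂ : ∀ p q, vPP₂ p q = ∑ k, A k * T₂ p q k)
    (hDD₁ : ∀ p q b, DD₁ p q b = DD₁ q p b) (hDD₂ : ∀ p q b, DD₂ p q b = DD₂ q p b)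
    (hC₁a : ∀ u v, C₁ u v = -C₁ v u) (hC₂a : ∀ u v, C₂ u v = -C₂ v u) :
    1/2 * ∑ p, ∑ q, (a p q * vPP₂ p q
        + DD₂ p q i * (∑ α, (S p α * vσ₁ q α + S q α * vσ₁ p α)))
      + ∑ p, (Mu p * vP₂ p + E₂ p i * vμ₁ p)
      + ∑ α, (S i α * vH₂ α + Hh₂ α * vσ₁ i α)
      - (t₂ * vμ₁ i + Mu i * vT₂)
      - (1/2 * ∑ p, ∑ q, (a p q * vPP₁ p q
            + DD₁ p q i * (∑ α, (S p α * vσ₂ q α + S q α * vσ₂ p α)))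
          + ∑ p, (Mu p * vP₁ p + E₁ p i * vμ₂ p)
          + ∑ α, (S i α * vH₁ α + Hh₁ α * vσ₂ i α)
          - (t₁ * vμ₂ i + Mu i * vT₁))
      - (1/2 * ∑ p, ∑ q, a p q
            * ((∑ k, ((A k * T₂ p q k + DD₂ q k i * E₁ p k)
                  + (E₂ k i * DD₁ p q k + E₁ q k * DD₂ p k i)))
              - ∑ k, ((B k * T₁ p q k + DD₁ q k i * E₂ p k)
                  + (E₁ k i * DD₂ p q k + E₂ q k * DD₁ p k i)))
          + ∑ p, Mu p * ((∑ k, (A k * DD₂ p k i + E₂ k i * E₁ p k))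
              - ∑ k, (B k * DD₁ p k i + E₁ k i * E₂ p k)))
      - ∑ β, (S i β * (vH₂ β - vH₁ β - (-t₁/2 * Hh₂ β + ∑ b, C₁ β b * Hh₂ b)
          + (-t₂/2 * Hh₁ β + ∑ b, C₂ β b * Hh₁ b)))
      + (vT₂ - vT₁) * Mu i = 0 := by
  simp only [hvσ₁, hvσ₂, hvμ₁, hvμ₂, hvP₁, hvP₂, hvPP₁, hvPP₂, ha]
  simp only [mul_add, add_mul, mul_sub, sub_mul, Finset.mul_sum, Finset.sum_mul,
    Finset.sum_add_distrib, Finset.sum_sub_distrib]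
  have h1 : ∑ p, ∑ q, ∑ k, ∑ α, 1/2*(S p α * S q α * (E₁ q k * DD₂ p k i))
      = ∑ p, ∑ q, ∑ α, ∑ j, 1/2*(DD₂ p q i * (S p α * (S j α * E₁ j q))) := by
    refine Finset.sum_congr rfl fun p _ => ?_
    rw [rot3 (fun q k α => 1/2*(S p α * S q α * (E₁ q k * DD₂ p k i)))]
    exact Finset.sum_congr rfl fun q _ => Finset.sum_congr rfl fun α _ =>
      Finset.sum_congr rfl fun j _ => by ring
  have h1' : ∑ p, ∑ q, ∑ k, ∑ α, 1/2*(S p α * S q α * (E₂ q k * DD₁ p k i))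
      = ∑ p, ∑ q, ∑ α, ∑ j, 1/2*(DD₁ p q i * (S p α * (S j α * E₂ j q))) := by
    refine Finset.sum_congr rfl fun p _ => ?_
    rw [rot3 (fun q k α => 1/2*(S p α * S q α * (E₂ q k * DD₁ p k i)))]
    exact Finset.sum_congr rfl fun q _ => Finset.sum_congr rfl fun α _ =>
      Finset.sum_congr rfl fun j _ => by ring
  have h2 : ∑ p, ∑ q, ∑ k, ∑ α, 1/2*(S p α * S q α * (DD₂ q k i * E₁ p k))
      = ∑ p, ∑ q, ∑ α, ∑ j, 1/2*(DD₂ p q i * (S q α * (S j α * E₁ j p))) := by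
    rw [rot3 (fun p q k => ∑ α, 1/2*(S p α * S q α * (DD₂ q k i * E₁ p k))),
      Finset.sum_comm]
    refine Finset.sum_congr rfl fun k _ => Finset.sum_congr rfl fun q _ => ?_
    rw [Finset.sum_comm]
    refine Finset.sum_congr rfl fun α _ => Finset.sum_congr rfl fun p _ => ?_
    rw [hDD₂ q k i]; ring
  have h2' : ∑ p, ∑ q, ∑ k, ∑ α, 1/2*(S p α * S q α * (DD₁ q k i * E₂ p k))
      = ∑ p, ∑ q, ∑ α, ∑ j, 1/2*(DD₁ p q i * (S q α * (S j α * E₂ j p))) := by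
    rw [rot3 (fun p q k => ∑ α, 1/2*(S p α * S q α * (DD₁ q k i * E₂ p k))),
      Finset.sum_comm]
    refine Finset.sum_congr rfl fun k _ => Finset.sum_congr rfl fun q _ => ?_
    rw [Finset.sum_comm]
    refine Finset.sum_congr rfl fun α _ => Finset.sum_congr rfl fun p _ => ?_
    rw [hDD₁ q k i]; ring
  have h3 : ∑ p, ∑ q, ∑ α, ∑ β, 1/2*(DD₂ p q i * (S q α * (S p β * C₁ β α)))
      = -∑ p, ∑ q, ∑ α, ∑ β, 1/2*(DD₂ p q i * (S p α * (S q β * C₁ β α))) := by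
    have : ∑ p, ∑ q, ∑ α, ∑ β, 1/2*(DD₂ p q i * (S q α * (S p β * C₁ β α)))
        = ∑ p, ∑ q, ∑ α, ∑ β, -(1/2*(DD₂ p q i * (S p α * (S q β * C₁ β α)))) := by
      refine Finset.sum_congr rfl fun p _ => Finset.sum_congr rfl fun q _ => ?_
      rw [Finset.sum_comm]
      refine Finset.sum_congr rfl fun α _ => Finset.sum_congr rfl fun β _ => ?_
      rw [hC₁a β α]; ring
    rw [this]; simp [Finset.sum_neg_distrib]
  have h3' : ∑ p, ∑ q, ∑ α, ∑ β, 1/2*(DD₁ p q i * (S q α * (S p β * C₂ β α)))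
      = -∑ p, ∑ q, ∑ α, ∑ β, 1/2*(DD₁ p q i * (S p α * (S q β * C₂ β α))) := by
    have : ∑ p, ∑ q, ∑ α, ∑ β, 1/2*(DD₁ p q i * (S q α * (S p β * C₂ β α)))
        = ∑ p, ∑ q, ∑ α, ∑ β, -(1/2*(DD₁ p q i * (S p α * (S q β * C₂ β α)))) := by
      refine Finset.sum_congr rfl fun p _ => Finset.sum_congr rfl fun q _ => ?_
      rw [Finset.sum_comm]
      refine Finset.sum_congr rfl fun α _ => Finset.sum_congr rfl fun β _ => ?_
      rw [hC₂a β α]; ring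
    rw [this]; simp [Finset.sum_neg_distrib]
  have h4 : ∑ p, ∑ q, ∑ k, ∑ α, 1/2*(S p α * S q α * (E₂ k i * DD₁ p q k))
      = ∑ p, ∑ u, ∑ v, ∑ α, E₂ p i * (1/2*(S u α * S v α * DD₁ u v p)) := by
    rw [rot3' (fun p q k => ∑ α, 1/2*(S p α * S q α * (E₂ k i * DD₁ p q k)))]
    exact Finset.sum_congr rfl fun k _ => Finset.sum_congr rfl fun p _ =>
      Finset.sum_congr rfl fun q _ => Finset.sum_congr rfl fun α _ => by ring
  have h4' : ∑ p, ∑ q, ∑ k, ∑ α, 1/2*(S p α * S q α * (E₁ k i * DD₂ p q k))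
      = ∑ p, ∑ u, ∑ v, ∑ α, E₁ p i * (1/2*(S u α * S v α * DD₂ u v p)) := by
    rw [rot3' (fun p q k => ∑ α, 1/2*(S p α * S q α * (E₁ k i * DD₂ p q k)))]
    exact Finset.sum_congr rfl fun k _ => Finset.sum_congr rfl fun p _ =>
      Finset.sum_congr rfl fun q _ => Finset.sum_congr rfl fun α _ => by ring
  have h5 : ∑ p, ∑ k, Mu p * (E₂ k i * E₁ p k)
      = ∑ p, ∑ u, E₂ p i * (Mu u * E₁ u p) := by
    rw [Finset.sum_comm]
    exact Finset.sum_congr rfl fun _ _ => Finset.sum_congr rfl fun _ _ => by ring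
  have h5' : ∑ p, ∑ k, Mu p * (E₁ k i * E₂ p k)
      = ∑ p, ∑ u, E₁ p i * (Mu u * E₂ u p) := by
    rw [Finset.sum_comm]
    exact Finset.sum_congr rfl fun _ _ => Finset.sum_congr rfl fun _ _ => by ring
  have h6 : ∑ p, ∑ α, E₂ p i * (S p α * Hh₁ α)
      = ∑ α, ∑ j, Hh₁ α * (S j α * E₂ j i) := by
    rw [Finset.sum_comm]
    exact Finset.sum_congr rfl fun _ _ => Finset.sum_congr rfl fun _ _ => by ring
  have h6' : ∑ p, ∑ α, E₁ p i * (S p α * Hh₂ α)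
      = ∑ α, ∑ j, Hh₂ α * (S j α * E₁ j i) := by
    rw [Finset.sum_comm]
    exact Finset.sum_congr rfl fun _ _ => Finset.sum_congr rfl fun _ _ => by ring
  have h7 : ∑ p, E₂ p i * (t₁ * Mu p) = ∑ u, t₁ * (Mu u * E₂ u i) :=
    Finset.sum_congr rfl fun _ _ => by ring
  have h7' : ∑ p, E₁ p i * (t₂ * Mu p) = ∑ u, t₂ * (Mu u * E₁ u i) :=
    Finset.sum_congr rfl fun _ _ => by ring
  have c1 : ∑ α, Hh₂ α * (1/2*(t₁ * S i α)) = 1/2 * ∑ α, t₁ * (S i α * Hh₂ α) := by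
    rw [Finset.mul_sum]; exact Finset.sum_congr rfl fun _ _ => by ring
  have c2 : ∑ α, S i α * (-t₁/2 * Hh₂ α) = -(1/2) * ∑ α, t₁ * (S i α * Hh₂ α) := by
    rw [Finset.mul_sum]; exact Finset.sum_congr rfl fun _ _ => by ring
  have c1' : ∑ α, Hh₁ α * (1/2*(t₂ * S i α)) = 1/2 * ∑ α, t₂ * (S i α * Hh₁ α) := by
    rw [Finset.mul_sum]; exact Finset.sum_congr rfl fun _ _ => by ring
  have c2' : ∑ α, S i α * (-t₂/2 * Hh₁ α) = -(1/2) * ∑ α, t₂ * (S i α * Hh₁ α) := by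
    rw [Finset.mul_sum]; exact Finset.sum_congr rfl fun _ _ => by ring
  have h9 : ∑ α, ∑ β, Hh₂ α * (S i β * C₁ β α)
      = ∑ α, ∑ b, S i α * (C₁ α b * Hh₂ b) := by
    rw [Finset.sum_comm]
    exact Finset.sum_congr rfl fun _ _ => Finset.sum_congr rfl fun _ _ => by ring
  have h9' : ∑ α, ∑ β, Hh₁ α * (S i β * C₂ β α)
      = ∑ α, ∑ b, S i α * (C₂ α b * Hh₁ b) := by
    rw [Finset.sum_comm]
    exact Finset.sum_congr rfl fun _ _ => Finset.sum_congr rfl fun _ _ => by ring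
  have h10 : ∑ p, ∑ q, ∑ β, 1/2*(DD₂ p q i * (S q β * (1/2*(t₁ * S p β))))
      = ∑ p, ∑ q, ∑ β, 1/2*(DD₂ p q i * (S p β * (1/2*(t₁ * S q β)))) :=
    Finset.sum_congr rfl fun _ _ => Finset.sum_congr rfl fun _ _ =>
      Finset.sum_congr rfl fun _ _ => by ring
  have h10' : ∑ p, ∑ q, ∑ β, 1/2*(DD₁ p q i * (S q β * (1/2*(t₂ * S p β))))
      = ∑ p, ∑ q, ∑ β, 1/2*(DD₁ p q i * (S p β * (1/2*(t₂ * S q β)))) :=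
    Finset.sum_congr rfl fun _ _ => Finset.sum_congr rfl fun _ _ =>
      Finset.sum_congr rfl fun _ _ => by ring
  have c3 : ∑ p, ∑ q, ∑ β, 1/2*(DD₂ p q i * (S p β * (1/2*(t₁ * S q β))))
      = 1/4 * ∑ p, ∑ q, ∑ β, t₁ * (S p β * S q β * DD₂ p q i) := by
    rw [Finset.mul_sum]
    refine Finset.sum_congr rfl fun p _ => ?_
    rw [Finset.mul_sum]
    refine Finset.sum_congr rfl fun q _ => ?_
    rw [Finset.mul_sum]
    exact Finset.sum_congr rfl fun _ _ => by ring
  have c4 : ∑ p, ∑ q, ∑ β, t₁ * (1/2*(S p β * S q β * DD₂ p q i))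
      = 1/2 * ∑ p, ∑ q, ∑ β, t₁ * (S p β * S q β * DD₂ p q i) := by
    rw [Finset.mul_sum]
    refine Finset.sum_congr rfl fun p _ => ?_
    rw [Finset.mul_sum]
    refine Finset.sum_congr rfl fun q _ => ?_
    rw [Finset.mul_sum]
    exact Finset.sum_congr rfl fun _ _ => by ring
  have c3' : ∑ p, ∑ q, ∑ β, 1/2*(DD₁ p q i * (S p β * (1/2*(t₂ * S q β))))
      = 1/4 * ∑ p, ∑ q, ∑ β, t₂ * (S p β * S q β * DD₁ p q i) := by
    rw [Finset.mul_sum]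
    refine Finset.sum_congr rfl fun p _ => ?_
    rw [Finset.mul_sum]
    refine Finset.sum_congr rfl fun q _ => ?_
    rw [Finset.mul_sum]
    exact Finset.sum_congr rfl fun _ _ => by ring
  have c4' : ∑ p, ∑ q, ∑ β, t₂ * (1/2*(S p β * S q β * DD₁ p q i))
      = 1/2 * ∑ p, ∑ q, ∑ β, t₂ * (S p β * S q β * DD₁ p q i) := by
    rw [Finset.mul_sum]
    refine Finset.sum_congr rfl fun p _ => ?_
    rw [Finset.mul_sum]
    refine Finset.sum_congr rfl fun q _ => ?_
    rw [Finset.mul_sum]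
    exact Finset.sum_congr rfl fun _ _ => by ring
  linarith [h1, h1', h2, h2', h3, h3', h4, h4', h5, h5', h6, h6', h7, h7',
    c1, c2, c1', c2', h9, h9', h10, h10', c3, c4, c3', c4']



lemma alg2 {n m : ℕ} (S : Fin n → Fin m → ℝ) (E₁ E₂ DD₁ DD₂ : Fin n → Fin n → ℝ)
    (A B : Fin n → ℝ) (C₁ C₂ : Fin m → Fin m → ℝ) (t₁ t₂ vT₁ vT₂ : ℝ)
    (vC₁ vC₂ : Fin m → ℝ) (i : Fin n) (α : Fin m) :
    ∑ j, (S j α * ∑ p, A p * DD₂ j p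
        + E₂ j i * (∑ k, S k α * E₁ k j - 1/2*(t₁ * S j α) - ∑ β, S j β * C₁ β α))
    - 1/2 * (t₂ * (∑ j, S j α * E₁ j i - 1/2*(t₁*S i α) - ∑ β, S i β * C₁ β α) + S i α * vT₂)
    - ∑ β, (S i β * vC₂ β + C₂ β α * (∑ k, S k β * E₁ k i - 1/2*(t₁*S i β) - ∑ γ, S i γ * C₁ γ β))
    - (∑ j, (S j α * ∑ p, B p * DD₁ j p
        + E₁ j i * (∑ k, S k α * E₂ k j - 1/2*(t₂ * S j α) - ∑ β, S j β * C₂ β α))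
      - 1/2 * (t₁ * (∑ j, S j α * E₂ j i - 1/2*(t₂*S i α) - ∑ β, S i β * C₂ β α) + S i α * vT₁)
      - ∑ β, (S i β * vC₁ β + C₁ β α * (∑ k, S k β * E₂ k i - 1/2*(t₂*S i β) - ∑ γ, S i γ * C₂ γ β)))
    - ∑ j, S j α * (∑ p, (A p * DD₂ j p + E₂ p i * E₁ j p) - ∑ p, (B p * DD₁ j p + E₁ p i * E₂ j p))
    + 1/2 * (vT₂ - vT₁) * S i α
    + ∑ β, S i β * (vC₂ β - vC₁ β - (∑ c, C₁ β c * C₂ c α - ∑ c, C₂ β c * C₁ c α)) = 0 := by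
  simp only [Finset.mul_sum, Finset.sum_mul, mul_sub, sub_mul, mul_add, add_mul,
    Finset.sum_add_distrib, Finset.sum_sub_distrib]
  have hA : ∑ x : Fin n, ∑ y : Fin n, E₂ x i * (S y α * E₁ y x)
      = ∑ x : Fin n, ∑ y : Fin n, S x α * (E₂ y i * E₁ x y) := by
    rw [Finset.sum_comm]
    exact Finset.sum_congr rfl fun _ _ => Finset.sum_congr rfl fun _ _ => by ring
  have hB : ∑ x : Fin n, ∑ y : Fin n, E₁ x i * (S y α * E₂ y x)
      = ∑ x : Fin n, ∑ y : Fin n, S x α * (E₁ y i * E₂ x y) := by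
    rw [Finset.sum_comm]
    exact Finset.sum_congr rfl fun _ _ => Finset.sum_congr rfl fun _ _ => by ring
  have hCc : ∑ x : Fin n, E₂ x i * (1/2*(t₁*S x α)) = ∑ x : Fin n, 1/2*(t₁*(S x α * E₂ x i)) :=
    Finset.sum_congr rfl fun _ _ => by ring
  have hD : ∑ x : Fin n, E₁ x i * (1/2*(t₂*S x α)) = ∑ x : Fin n, 1/2*(t₂*(S x α * E₁ x i)) :=
    Finset.sum_congr rfl fun _ _ => by ring
  have hE : ∑ x : Fin n, ∑ β : Fin m, E₂ x i * (S x β * C₁ β α)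
      = ∑ β : Fin m, ∑ x : Fin n, C₁ β α * (S x β * E₂ x i) := by
    rw [Finset.sum_comm]
    exact Finset.sum_congr rfl fun _ _ => Finset.sum_congr rfl fun _ _ => by ring
  have hF : ∑ x : Fin n, ∑ β : Fin m, E₁ x i * (S x β * C₂ β α)
      = ∑ β : Fin m, ∑ x : Fin n, C₂ β α * (S x β * E₁ x i) := by
    rw [Finset.sum_comm]
    exact Finset.sum_congr rfl fun _ _ => Finset.sum_congr rfl fun _ _ => by ring
  have hG : ∑ β : Fin m, C₂ β α * (1/2*(t₁*S i β)) = ∑ β : Fin m, 1/2*(t₁*(S i β * C₂ β α)) :=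
    Finset.sum_congr rfl fun _ _ => by ring
  have hH : ∑ β : Fin m, C₁ β α * (1/2*(t₂*S i β)) = ∑ β : Fin m, 1/2*(t₂*(S i β * C₁ β α)) :=
    Finset.sum_congr rfl fun _ _ => by ring
  have hI : ∑ β : Fin m, ∑ γ : Fin m, C₂ β α * (S i γ * C₁ γ β)
      = ∑ β : Fin m, ∑ γ : Fin m, S i β * (C₁ β γ * C₂ γ α) := by
    rw [Finset.sum_comm]
    exact Finset.sum_congr rfl fun _ _ => Finset.sum_congr rfl fun _ _ => by ring
  have hJ : ∑ β : Fin m, ∑ γ : Fin m, C₁ β α * (S i γ * C₂ γ β)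
      = ∑ β : Fin m, ∑ γ : Fin m, S i β * (C₂ β γ * C₁ γ α) := by
    rw [Finset.sum_comm]
    exact Finset.sum_congr rfl fun _ _ => Finset.sum_congr rfl fun _ _ => by ring
  rw [hA, hB, hCc, hD, hE, hF, hG, hH, hI, hJ]
  ring



lemma core2 {n m : ℕ} (S : Fin n → Fin m → ℝ) (E₁ E₂ : Fin n → Fin n → ℝ)
    (C₁ C₂ : Fin m → Fin m → ℝ) (t₁ t₂ : ℝ) (i : Fin n) (α : Fin m) :
    ∑ j, (∑ k, S k α * E₁ k j - (1/2)*t₁*S j α - ∑ β, S j β * C₁ β α) * E₂ j i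
  - ∑ j, (∑ k, S k α * E₂ k j - (1/2)*t₂*S j α - ∑ β, S j β * C₂ β α) * E₁ j i
  - (1/2)*t₂*(∑ k, S k α * E₁ k i - (1/2)*t₁*S i α - ∑ β, S i β * C₁ β α)
  + (1/2)*t₁*(∑ k, S k α * E₂ k i - (1/2)*t₂*S i α - ∑ β, S i β * C₂ β α)
  - ∑ β, C₂ β α * (∑ k, S k β * E₁ k i - (1/2)*t₁*S i β - ∑ γ, S i γ * C₁ γ β)
  + ∑ β, C₁ β α * (∑ k, S k β * E₂ k i - (1/2)*t₂*S i β - ∑ γ, S i γ * C₂ γ β)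
  - ∑ j, S j α * (∑ p, E₂ p i * E₁ j p - ∑ p, E₁ p i * E₂ j p)
  - ∑ β, S i β * (∑ c, C₁ β c * C₂ c α) + ∑ β, S i β * (∑ c, C₂ β c * C₁ c α) = 0 := by
  have h1 : ∑ j, (∑ k, S k α * E₁ k j) * E₂ j i = ∑ j, S j α * ∑ p, E₂ p i * E₁ j p := by
    simp only [Finset.sum_mul, Finset.mul_sum]
    rw [Finset.sum_comm]
    exact Finset.sum_congr rfl fun k _ => Finset.sum_congr rfl fun j _ => by ring
  have h2 : ∑ j, (∑ k, S k α * E₂ k j) * E₁ j i = ∑ j, S j α * ∑ p, E₁ p i * E₂ j p := by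
    simp only [Finset.sum_mul, Finset.mul_sum]
    rw [Finset.sum_comm]
    exact Finset.sum_congr rfl fun k _ => Finset.sum_congr rfl fun j _ => by ring
  have h3 : ∑ j, (∑ β, S j β * C₁ β α) * E₂ j i = ∑ β, C₁ β α * ∑ k, S k β * E₂ k i := by
    simp only [Finset.sum_mul, Finset.mul_sum]
    rw [Finset.sum_comm]
    exact Finset.sum_congr rfl fun β _ => Finset.sum_congr rfl fun j _ => by ring
  have h4 : ∑ j, (∑ β, S j β * C₂ β α) * E₁ j i = ∑ β, C₂ β α * ∑ k, S k β * E₁ k i := by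
    simp only [Finset.sum_mul, Finset.mul_sum]
    rw [Finset.sum_comm]
    exact Finset.sum_congr rfl fun β _ => Finset.sum_congr rfl fun j _ => by ring
  have h5 : ∑ β, C₂ β α * ∑ γ, S i γ * C₁ γ β = ∑ β, S i β * ∑ c, C₁ β c * C₂ c α := by
    simp only [Finset.sum_mul, Finset.mul_sum]
    rw [Finset.sum_comm]
    exact Finset.sum_congr rfl fun γ _ => Finset.sum_congr rfl fun β _ => by ring
  have h6 : ∑ β, C₁ β α * ∑ γ, S i γ * C₂ γ β = ∑ β, S i β * ∑ c, C₂ β c * C₁ c α := by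
    simp only [Finset.sum_mul, Finset.mul_sum]
    rw [Finset.sum_comm]
    exact Finset.sum_congr rfl fun γ _ => Finset.sum_congr rfl fun β _ => by ring
  simp only [sub_mul, mul_sub, Finset.sum_sub_distrib]
  have h7 : ∑ x, 1/2*t₁*S x α*E₂ x i = 1/2*t₁*∑ k, S k α * E₂ k i := by
    rw [Finset.mul_sum]; exact Finset.sum_congr rfl fun _ _ => by ring
  have h8 : ∑ x, 1/2*t₂*S x α*E₁ x i = 1/2*t₂*∑ k, S k α * E₁ k i := by
    rw [Finset.mul_sum]; exact Finset.sum_congr rfl fun _ _ => by ring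
  have h9 : ∑ x, C₁ x α*(1/2*t₂*S i x) = 1/2*t₂*∑ β, S i β * C₁ β α := by
    rw [Finset.mul_sum]; exact Finset.sum_congr rfl fun _ _ => by ring
  have h10 : ∑ x, C₂ x α*(1/2*t₁*S i x) = 1/2*t₁*∑ β, S i β * C₂ β α := by
    rw [Finset.mul_sum]; exact Finset.sum_congr rfl fun _ _ => by ring
  rw [h1, h2, h3, h4, h5, h6, h7, h8, h9, h10]
  ring

section glue
variable {n m : ℕ} {M : Set (Fin n → ℝ)} {f g : (Fin n → ℝ) → ℝ} {x : Fin n → ℝ}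
variable {Y₁ Y₂ : (Fin n → ℝ) → Fin n → ℝ}

lemma vfd_swap2 (hM : IsOpen M) (hx : x ∈ M) (hY₁ : ∀ i, Sm M (fun y => Y₁ y i))
    (hY₂ : ∀ i, Sm M (fun y => Y₂ y i)) (hf : Sm M f) :
    ∑ j, Y₂ x j * vfd Y₁ (pd j f) x = ∑ j, Y₁ x j * vfd Y₂ (pd j f) x := by
  unfold vfd
  simp only [Finset.mul_sum]
  rw [Finset.sum_comm]
  refine Finset.sum_congr rfl (fun j _ => Finset.sum_congr rfl (fun p _ => ?_))
  rw [pd_comm hM hf hx p j]; ring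

lemma vfd_bracket (hM : IsOpen M) (hx : x ∈ M) (hY₁ : ∀ i, Sm M (fun y => Y₁ y i))
    (hY₂ : ∀ i, Sm M (fun y => Y₂ y i)) (hf : Sm M f) :
    vfd (brY Y₁ Y₂) f x = vfd Y₁ (vfd Y₂ f) x - vfd Y₂ (vfd Y₁ f) x := by
  have e₂ : vfd Y₁ (vfd Y₂ f) x
      = ∑ j, (Y₂ x j * vfd Y₁ (pd j f) x + pd j f x * vfd Y₁ (fun y => Y₂ y j) x) := by
    show vfd Y₁ (fun z => ∑ j, Y₂ z j * pd j f z) x = _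
    rw [vfd_sum Finset.univ (fun j z => Y₂ z j * pd j f z)
      (fun j _ => (((hY₂ j).mul (hf.pd hM j)).diffAt hM hx))]
    exact Finset.sum_congr rfl (fun j _ =>
      vfd_mul ((hY₂ j).diffAt hM hx) ((hf.pd hM j).diffAt hM hx))
  have e₁ : vfd Y₂ (vfd Y₁ f) x
      = ∑ j, (Y₁ x j * vfd Y₂ (pd j f) x + pd j f x * vfd Y₂ (fun y => Y₁ y j) x) := by
    show vfd Y₂ (fun z => ∑ j, Y₁ z j * pd j f z) x = _
    rw [vfd_sum Finset.univ (fun j z => Y₁ z j * pd j f z)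
      (fun j _ => (((hY₁ j).mul (hf.pd hM j)).diffAt hM hx))]
    exact Finset.sum_congr rfl (fun j _ =>
      vfd_mul ((hY₁ j).diffAt hM hx) ((hf.pd hM j).diffAt hM hx))
  rw [e₁, e₂]
  have key := vfd_swap2 hM hx hY₁ hY₂ hf
  show ∑ j, brY Y₁ Y₂ x j * pd j f x = _
  unfold brY
  rw [Finset.sum_add_distrib, Finset.sum_add_distrib, key]
  ring_nf
  rw [Finset.sum_sub_distrib]
  ring_nf
  congr 1 <;> exact Finset.sum_congr rfl (fun j _ => mul_comm _ _)

variable {σ : (Fin n → ℝ) → Matrix (Fin n) (Fin m) ℝ}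
variable {C₁ C₂ : (Fin n → ℝ) → Matrix (Fin m) (Fin m) ℝ} {τ₁ τ₂ : (Fin n → ℝ) → ℝ}

lemma det2_br (hM : IsOpen M) (hσ : SmoothMat M σ)
    (hY₁ : SmoothVec M Y₁) (hY₂ : SmoothVec M Y₂)
    (hC₁s : SmoothMat M C₁) (hC₂s : SmoothMat M C₂)
    (hτ₁ : ContDiffOn ℝ (⊤:ℕ∞) τ₁ M) (hτ₂ : ContDiffOn ℝ (⊤:ℕ∞) τ₂ M)
    (h2₁ : ∀ x ∈ M, ∀ i, ∀ α, vfd Y₁ (fun y => σ y i α) x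
      - (∑ j, σ x j α * pd j (fun y => Y₁ y i) x)
      + (1 / 2) * τ₁ x * σ x i α + (∑ β, σ x i β * C₁ x β α) = 0)
    (h2₂ : ∀ x ∈ M, ∀ i, ∀ α, vfd Y₂ (fun y => σ y i α) x
      - (∑ j, σ x j α * pd j (fun y => Y₂ y i) x)
      + (1 / 2) * τ₂ x * σ x i α + (∑ β, σ x i β * C₂ x β α) = 0)
    (hx : x ∈ M) (i : Fin n) (α : Fin m) :
    vfd (brY Y₁ Y₂) (fun y => σ y i α) x
      - (∑ j, σ x j α * pd j (fun y => brY Y₁ Y₂ y i) x)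
      + (1 / 2) * brTau Y₁ Y₂ τ₁ τ₂ x * σ x i α
      + (∑ β, σ x i β * brC Y₁ Y₂ C₁ C₂ x β α) = 0 := by
  have smY₁ : ∀ j, Sm M (fun y => Y₁ y j) := fun j => hY₁ j
  have smY₂ : ∀ j, Sm M (fun y => Y₂ y j) := fun j => hY₂ j
  have smσ : ∀ j β, Sm M (fun y => σ y j β) := fun j β => hσ j β
  have smC₁ : ∀ a b, Sm M (fun y => C₁ y a b) := fun a b => hC₁s a b
  have smC₂ : ∀ a b, Sm M (fun y => C₂ y a b) := fun a b => hC₂s a b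
  have smτ₁ : Sm M τ₁ := hτ₁
  have smτ₂ : Sm M τ₂ := hτ₂
  -- solved determining equations
  have sol₁ : ∀ z ∈ M, ∀ i α, vfd Y₁ (fun y => σ y i α) z
      = (∑ j, σ z j α * pd j (fun y => Y₁ y i) z) - 1/2*(τ₁ z * σ z i α)
        - ∑ β, σ z i β * C₁ z β α := by
    intro z hz i α; have := h2₁ z hz i α; linarith
  have sol₂ : ∀ z ∈ M, ∀ i α, vfd Y₂ (fun y => σ y i α) z
      = (∑ j, σ z j α * pd j (fun y => Y₂ y i) z) - 1/2*(τ₂ z * σ z i α)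
        - ∑ β, σ z i β * C₂ z β α := by
    intro z hz i α; have := h2₂ z hz i α; linarith
  -- expansion of vfd Y₁ (vfd Y₂ σiα) x
  have exp₂ : vfd Y₁ (vfd Y₂ (fun y => σ y i α)) x
      = (∑ j, (σ x j α * vfd Y₁ (pd j (fun y => Y₂ y i)) x
            + pd j (fun y => Y₂ y i) x * vfd Y₁ (fun y => σ y j α) x))
        - 1/2*(τ₂ x * vfd Y₁ (fun y => σ y i α) x + σ x i α * vfd Y₁ τ₂ x)
        - ∑ β, (σ x i β * vfd Y₁ (fun y => C₂ y β α) x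
            + C₂ x β α * vfd Y₁ (fun y => σ y i β) x) := by
    rw [vfd_congr hM hx (fun z hz => sol₂ z hz i α)]
    have dA : DifferentiableAt ℝ (fun z => ∑ j, σ z j α * pd j (fun y => Y₂ y i) z) x :=
      (Sm.sum Finset.univ _ (fun j _ => (smσ j α).mul ((smY₂ i).pd hM j))).diffAt hM hx
    have dB : DifferentiableAt ℝ (fun z => 1/2*(τ₂ z * σ z i α)) x :=
      ((smτ₂.mul (smσ i α)).constMul (1/2)).diffAt hM hx
    have dC : DifferentiableAt ℝ (fun z => ∑ β, σ z i β * C₂ z β α) x :=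
      (Sm.sum Finset.univ _ (fun β _ => (smσ i β).mul (smC₂ β α))).diffAt hM hx
    rw [vfd_sub (dA.fun_sub dB) dC, vfd_sub dA dB]
    rw [vfd_sum Finset.univ _ (fun j _ => ((smσ j α).mul ((smY₂ i).pd hM j)).diffAt hM hx)]
    rw [vfd_sum Finset.univ _ (fun β _ => ((smσ i β).mul (smC₂ β α)).diffAt hM hx)]
    rw [vfd_const_mul (1/2) ((smτ₂.mul (smσ i α)).diffAt hM hx)]
    rw [vfd_mul (smτ₂.diffAt hM hx) ((smσ i α).diffAt hM hx)]
    rw [Finset.sum_congr rfl (fun j (_ : j ∈ Finset.univ) =>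
        vfd_mul (Y := Y₁) ((smσ j α).diffAt hM hx) (((smY₂ i).pd hM j).diffAt hM hx))]
    rw [Finset.sum_congr rfl (fun β (_ : β ∈ Finset.univ) =>
        vfd_mul (Y := Y₁) ((smσ i β).diffAt hM hx) ((smC₂ β α).diffAt hM hx))]
  have exp₁ : vfd Y₂ (vfd Y₁ (fun y => σ y i α)) x
      = (∑ j, (σ x j α * vfd Y₂ (pd j (fun y => Y₁ y i)) x
            + pd j (fun y => Y₁ y i) x * vfd Y₂ (fun y => σ y j α) x))
        - 1/2*(τ₁ x * vfd Y₂ (fun y => σ y i α) x + σ x i α * vfd Y₂ τ₁ x)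
        - ∑ β, (σ x i β * vfd Y₂ (fun y => C₁ y β α) x
            + C₁ x β α * vfd Y₂ (fun y => σ y i β) x) := by
    rw [vfd_congr hM hx (fun z hz => sol₁ z hz i α)]
    have dA : DifferentiableAt ℝ (fun z => ∑ j, σ z j α * pd j (fun y => Y₁ y i) z) x :=
      (Sm.sum Finset.univ _ (fun j _ => (smσ j α).mul ((smY₁ i).pd hM j))).diffAt hM hx
    have dB : DifferentiableAt ℝ (fun z => 1/2*(τ₁ z * σ z i α)) x :=
      ((smτ₁.mul (smσ i α)).constMul (1/2)).diffAt hM hx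
    have dC : DifferentiableAt ℝ (fun z => ∑ β, σ z i β * C₁ z β α) x :=
      (Sm.sum Finset.univ _ (fun β _ => (smσ i β).mul (smC₁ β α))).diffAt hM hx
    rw [vfd_sub (dA.fun_sub dB) dC, vfd_sub dA dB]
    rw [vfd_sum Finset.univ _ (fun j _ => ((smσ j α).mul ((smY₁ i).pd hM j)).diffAt hM hx)]
    rw [vfd_sum Finset.univ _ (fun β _ => ((smσ i β).mul (smC₁ β α)).diffAt hM hx)]
    rw [vfd_const_mul (1/2) ((smτ₁.mul (smσ i α)).diffAt hM hx)]
    rw [vfd_mul (smτ₁.diffAt hM hx) ((smσ i α).diffAt hM hx)]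
    rw [Finset.sum_congr rfl (fun j (_ : j ∈ Finset.univ) =>
        vfd_mul (Y := Y₂) ((smσ j α).diffAt hM hx) (((smY₁ i).pd hM j).diffAt hM hx))]
    rw [Finset.sum_congr rfl (fun β (_ : β ∈ Finset.univ) =>
        vfd_mul (Y := Y₂) ((smσ i β).diffAt hM hx) ((smC₁ β α).diffAt hM hx))]
  -- second-derivative alignment
  have swp₁ : ∀ j, vfd Y₁ (pd j (fun y => Y₂ y i)) x
      = ∑ p, Y₁ x p * pd j (pd p (fun y => Y₂ y i)) x := fun j =>
    Finset.sum_congr rfl fun p _ => by rw [pd_comm hM (smY₂ i) hx p j]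
  have swp₂ : ∀ j, vfd Y₂ (pd j (fun y => Y₁ y i)) x
      = ∑ p, Y₂ x p * pd j (pd p (fun y => Y₁ y i)) x := fun j =>
    Finset.sum_congr rfl fun p _ => by rw [pd_comm hM (smY₁ i) hx p j]
  -- expansion of pd j (brY · i)
  have pdbr : ∀ j, pd j (fun y => brY Y₁ Y₂ y i) x
      = (∑ p, (Y₁ x p * pd j (pd p (fun y => Y₂ y i)) x
            + pd p (fun y => Y₂ y i) x * pd j (fun y => Y₁ y p) x))
        - ∑ p, (Y₂ x p * pd j (pd p (fun y => Y₁ y i)) x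
            + pd p (fun y => Y₁ y i) x * pd j (fun y => Y₂ y p) x) := by
    intro j
    have hbr : (fun y => brY Y₁ Y₂ y i)
        = (fun y => (∑ p, Y₁ y p * pd p (fun y' => Y₂ y' i) y)
            - ∑ p, Y₂ y p * pd p (fun y' => Y₁ y' i) y) := rfl
    rw [hbr]
    have d1 : DifferentiableAt ℝ (fun y => ∑ p, Y₁ y p * pd p (fun y' => Y₂ y' i) y) x :=
      (Sm.sum Finset.univ _ (fun p _ => (smY₁ p).mul ((smY₂ i).pd hM p))).diffAt hM hx
    have d2 : DifferentiableAt ℝ (fun y => ∑ p, Y₂ y p * pd p (fun y' => Y₁ y' i) y) x :=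
      (Sm.sum Finset.univ _ (fun p _ => (smY₂ p).mul ((smY₁ i).pd hM p))).diffAt hM hx
    rw [pd_sub d1 d2,
      pd_sum Finset.univ _ (fun p _ => ((smY₁ p).mul ((smY₂ i).pd hM p)).diffAt hM hx),
      pd_sum Finset.univ _ (fun p _ => ((smY₂ p).mul ((smY₁ i).pd hM p)).diffAt hM hx),
      Finset.sum_congr rfl (fun p (_ : p ∈ Finset.univ) =>
        pd_mul ((smY₁ p).diffAt hM hx) (((smY₂ i).pd hM p).diffAt hM hx) j),
      Finset.sum_congr rfl (fun p (_ : p ∈ Finset.univ) =>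
        pd_mul ((smY₂ p).diffAt hM hx) (((smY₁ i).pd hM p).diffAt hM hx) j)]
  -- assemble
  rw [vfd_bracket hM hx smY₁ smY₂ (smσ i α), exp₂, exp₁]
  simp only [brTau, brC, Matrix.of_apply]
  rw [Finset.sum_congr rfl (fun j (_ : j ∈ Finset.univ) => by rw [pdbr j] :
    ∀ j ∈ Finset.univ, σ x j α * pd j (fun y => brY Y₁ Y₂ y i) x
      = σ x j α * ((∑ p, (Y₁ x p * pd j (pd p (fun y => Y₂ y i)) x
            + pd p (fun y => Y₂ y i) x * pd j (fun y => Y₁ y p) x))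
        - ∑ p, (Y₂ x p * pd j (pd p (fun y => Y₁ y i)) x
            + pd p (fun y => Y₁ y i) x * pd j (fun y => Y₂ y p) x)))]
  rw [Finset.sum_congr rfl (fun j (_ : j ∈ Finset.univ) => by rw [swp₁ j, sol₁ x hx j α] :
    ∀ j ∈ Finset.univ, σ x j α * vfd Y₁ (pd j (fun y => Y₂ y i)) x
        + pd j (fun y => Y₂ y i) x * vfd Y₁ (fun y => σ y j α) x
      = σ x j α * (∑ p, Y₁ x p * pd j (pd p (fun y => Y₂ y i)) x)
        + pd j (fun y => Y₂ y i) x * ((∑ k, σ x k α * pd k (fun y => Y₁ y j) x)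
            - 1/2*(τ₁ x * σ x j α) - ∑ β, σ x j β * C₁ x β α))]
  rw [Finset.sum_congr rfl (fun j (_ : j ∈ Finset.univ) => by rw [swp₂ j, sol₂ x hx j α] :
    ∀ j ∈ Finset.univ, σ x j α * vfd Y₂ (pd j (fun y => Y₁ y i)) x
        + pd j (fun y => Y₁ y i) x * vfd Y₂ (fun y => σ y j α) x
      = σ x j α * (∑ p, Y₂ x p * pd j (pd p (fun y => Y₁ y i)) x)
        + pd j (fun y => Y₁ y i) x * ((∑ k, σ x k α * pd k (fun y => Y₂ y j) x)
            - 1/2*(τ₂ x * σ x j α) - ∑ β, σ x j β * C₂ x β α))]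
  rw [Finset.sum_congr rfl (fun β (_ : β ∈ Finset.univ) => by rw [sol₁ x hx i β] :
    ∀ β ∈ Finset.univ, σ x i β * vfd Y₁ (fun y => C₂ y β α) x
        + C₂ x β α * vfd Y₁ (fun y => σ y i β) x
      = σ x i β * vfd Y₁ (fun y => C₂ y β α) x
        + C₂ x β α * ((∑ k, σ x k β * pd k (fun y => Y₁ y i) x)
            - 1/2*(τ₁ x * σ x i β) - ∑ γ, σ x i γ * C₁ x γ β))]
  rw [Finset.sum_congr rfl (fun β (_ : β ∈ Finset.univ) => by rw [sol₂ x hx i β] :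
    ∀ β ∈ Finset.univ, σ x i β * vfd Y₂ (fun y => C₁ y β α) x
        + C₁ x β α * vfd Y₂ (fun y => σ y i β) x
      = σ x i β * vfd Y₂ (fun y => C₁ y β α) x
        + C₁ x β α * ((∑ k, σ x k β * pd k (fun y => Y₂ y i) x)
            - 1/2*(τ₂ x * σ x i β) - ∑ γ, σ x i γ * C₂ x γ β))]
  rw [sol₁ x hx i α, sol₂ x hx i α]
  simp only [Matrix.mul_apply]
  exact alg2 (fun j β => σ x j β) (fun a b => pd a (fun y => Y₁ y b) x)
    (fun a b => pd a (fun y => Y₂ y b) x) (fun j p => pd j (pd p (fun y => Y₁ y i)) x)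
    (fun j p => pd j (pd p (fun y => Y₂ y i)) x) (Y₁ x) (Y₂ x) (C₁ x) (C₂ x)
    (τ₁ x) (τ₂ x) (vfd Y₂ τ₁ x) (vfd Y₁ τ₂ x) (fun β => vfd Y₂ (fun y => C₁ y β α) x)
    (fun β => vfd Y₁ (fun y => C₂ y β α) x) i α

set_option maxHeartbeats 2000000 in
lemma det1_br {μ : (Fin n → ℝ) → Fin n → ℝ} {H₁ H₂ : (Fin n → ℝ) → Fin m → ℝ}
    (hM : IsOpen M) (hμ : SmoothVec M μ) (hσ : SmoothMat M σ)
    (hY₁ : SmoothVec M Y₁) (hY₂ : SmoothVec M Y₂)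
    (hC₁s : SmoothMat M C₁) (hC₂s : SmoothMat M C₂)
    (hτ₁ : ContDiffOn ℝ (⊤:ℕ∞) τ₁ M) (hτ₂ : ContDiffOn ℝ (⊤:ℕ∞) τ₂ M)
    (hH₁ : SmoothVec M H₁) (hH₂ : SmoothVec M H₂)
    (hC₁ : ∀ x ∈ M, (C₁ x)ᵀ = -(C₁ x)) (hC₂ : ∀ x ∈ M, (C₂ x)ᵀ = -(C₂ x))
    (h1₁ : ∀ x ∈ M, ∀ i, vfd Y₁ (fun y => μ y i) x - gen μ σ (fun y => Y₁ y i) x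
      - (∑ α, σ x i α * H₁ x α) + τ₁ x * μ x i = 0)
    (h1₂ : ∀ x ∈ M, ∀ i, vfd Y₂ (fun y => μ y i) x - gen μ σ (fun y => Y₂ y i) x
      - (∑ α, σ x i α * H₂ x α) + τ₂ x * μ x i = 0)
    (h2₁ : ∀ x ∈ M, ∀ i, ∀ α, vfd Y₁ (fun y => σ y i α) x
      - (∑ j, σ x j α * pd j (fun y => Y₁ y i) x)
      + (1 / 2) * τ₁ x * σ x i α + (∑ β, σ x i β * C₁ x β α) = 0)
    (h2₂ : ∀ x ∈ M, ∀ i, ∀ α, vfd Y₂ (fun y => σ y i α) x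
      - (∑ j, σ x j α * pd j (fun y => Y₂ y i) x)
      + (1 / 2) * τ₂ x * σ x i α + (∑ β, σ x i β * C₂ x β α) = 0)
    (hx : x ∈ M) (i : Fin n) :
    vfd (brY Y₁ Y₂) (fun y => μ y i) x - gen μ σ (fun y => brY Y₁ Y₂ y i) x
      - (∑ α, σ x i α * brH Y₁ Y₂ C₁ C₂ τ₁ τ₂ H₁ H₂ x α)
      + brTau Y₁ Y₂ τ₁ τ₂ x * μ x i = 0 := by
  have smY₁ : ∀ j, Sm M (fun y => Y₁ y j) := fun j => hY₁ j
  have smY₂ : ∀ j, Sm M (fun y => Y₂ y j) := fun j => hY₂ j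
  have smσ : ∀ j β, Sm M (fun y => σ y j β) := fun j β => hσ j β
  have smμ : ∀ j, Sm M (fun y => μ y j) := fun j => hμ j
  have smH₁ : ∀ a, Sm M (fun y => H₁ y a) := fun a => hH₁ a
  have smH₂ : ∀ a, Sm M (fun y => H₂ y a) := fun a => hH₂ a
  have smτ₁ : Sm M τ₁ := hτ₁
  have smτ₂ : Sm M τ₂ := hτ₂
  have sol₁ : ∀ z ∈ M, ∀ i α, vfd Y₁ (fun y => σ y i α) z
      = (∑ j, σ z j α * pd j (fun y => Y₁ y i) z) - 1/2*(τ₁ z * σ z i α)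
        - ∑ β, σ z i β * C₁ z β α := by
    intro z hz i α; have := h2₁ z hz i α; linarith
  have sol₂ : ∀ z ∈ M, ∀ i α, vfd Y₂ (fun y => σ y i α) z
      = (∑ j, σ z j α * pd j (fun y => Y₂ y i) z) - 1/2*(τ₂ z * σ z i α)
        - ∑ β, σ z i β * C₂ z β α := by
    intro z hz i α; have := h2₂ z hz i α; linarith
  have sol1₁ : ∀ z ∈ M, ∀ p, vfd Y₁ (fun y => μ y p) z
      = (gen μ σ (fun y => Y₁ y p) z + ∑ α, σ z p α * H₁ z α) - τ₁ z * μ z p := by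
    intro z hz p; have := h1₁ z hz p; linarith
  have sol1₂ : ∀ z ∈ M, ∀ p, vfd Y₂ (fun y => μ y p) z
      = (gen μ σ (fun y => Y₂ y p) z + ∑ α, σ z p α * H₂ z α) - τ₂ z * μ z p := by
    intro z hz p; have := h1₂ z hz p; linarith
  have smgen : ∀ (f : (Fin n → ℝ) → ℝ), Sm M f → Sm M (gen μ σ f) := fun f hf =>
    Sm.add
      (Sm.constMul (1/2) (Sm.sum Finset.univ _ (fun p _ => Sm.sum Finset.univ _ (fun q _ =>
        (Sm.sum Finset.univ _ (fun α _ => (smσ p α).mul (smσ q α))).mul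
          ((hf.pd hM q).pd hM p)))))
      (Sm.sum Finset.univ _ (fun p _ => (smμ p).mul (hf.pd hM p)))
  -- expansion of vfd Y₁ (vfd Y₂ μᵢ)
  have dgen₂ : DifferentiableAt ℝ (gen μ σ (fun y => Y₂ y i)) x :=
    (smgen _ (smY₂ i)).diffAt hM hx
  have dgen₁ : DifferentiableAt ℝ (gen μ σ (fun y => Y₁ y i)) x :=
    (smgen _ (smY₁ i)).diffAt hM hx
  have dσH₂ : DifferentiableAt ℝ (fun z => ∑ α, σ z i α * H₂ z α) x :=
    (Sm.sum Finset.univ _ (fun α _ => (smσ i α).mul (smH₂ α))).diffAt hM hx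
  have dσH₁ : DifferentiableAt ℝ (fun z => ∑ α, σ z i α * H₁ z α) x :=
    (Sm.sum Finset.univ _ (fun α _ => (smσ i α).mul (smH₁ α))).diffAt hM hx
  have dτμ₂ : DifferentiableAt ℝ (fun z => τ₂ z * μ z i) x :=
    (smτ₂.mul (smμ i)).diffAt hM hx
  have dτμ₁ : DifferentiableAt ℝ (fun z => τ₁ z * μ z i) x :=
    (smτ₁.mul (smμ i)).diffAt hM hx
  have exp₂ : vfd Y₁ (vfd Y₂ (fun y => μ y i)) x
      = (vfd Y₁ (gen μ σ (fun y => Y₂ y i)) x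
          + ∑ α, (σ x i α * vfd Y₁ (fun y => H₂ y α) x + H₂ x α * vfd Y₁ (fun y => σ y i α) x))
        - (τ₂ x * vfd Y₁ (fun y => μ y i) x + μ x i * vfd Y₁ τ₂ x) := by
    rw [vfd_congr hM hx (fun z hz => sol1₂ z hz i)]
    rw [vfd_sub (dgen₂.fun_add dσH₂) dτμ₂, vfd_add dgen₂ dσH₂,
      vfd_mul (smτ₂.diffAt hM hx) ((smμ i).diffAt hM hx),
      vfd_sum Finset.univ _ (fun α _ => ((smσ i α).mul (smH₂ α)).diffAt hM hx),
      Finset.sum_congr rfl (fun α (_ : α ∈ Finset.univ) =>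
        vfd_mul (Y := Y₁) ((smσ i α).diffAt hM hx) ((smH₂ α).diffAt hM hx))]
  have exp₁ : vfd Y₂ (vfd Y₁ (fun y => μ y i)) x
      = (vfd Y₂ (gen μ σ (fun y => Y₁ y i)) x
          + ∑ α, (σ x i α * vfd Y₂ (fun y => H₁ y α) x + H₁ x α * vfd Y₂ (fun y => σ y i α) x))
        - (τ₁ x * vfd Y₂ (fun y => μ y i) x + μ x i * vfd Y₂ τ₁ x) := by
    rw [vfd_congr hM hx (fun z hz => sol1₁ z hz i)]
    rw [vfd_sub (dgen₁.fun_add dσH₁) dτμ₁, vfd_add dgen₁ dσH₁,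
      vfd_mul (smτ₁.diffAt hM hx) ((smμ i).diffAt hM hx),
      vfd_sum Finset.univ _ (fun α _ => ((smσ i α).mul (smH₁ α)).diffAt hM hx),
      Finset.sum_congr rfl (fun α (_ : α ∈ Finset.univ) =>
        vfd_mul (Y := Y₂) ((smσ i α).diffAt hM hx) ((smH₁ α).diffAt hM hx))]
  -- expansion of vfd Y₁ (gen μ σ Y₂ᵢ)
  have smA : ∀ p q, Sm M (fun z => ∑ α, σ z p α * σ z q α) := fun p q =>
    Sm.sum Finset.univ _ (fun α _ => (smσ p α).mul (smσ q α))
  have genexp₂ : vfd Y₁ (gen μ σ (fun y => Y₂ y i)) x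
      = 1/2 * ∑ p, ∑ q, ((∑ α, σ x p α * σ x q α) * vfd Y₁ (pd p (pd q (fun y => Y₂ y i))) x
          + pd p (pd q (fun y => Y₂ y i)) x
            * (∑ α, (σ x p α * vfd Y₁ (fun y => σ y q α) x
                + σ x q α * vfd Y₁ (fun y => σ y p α) x)))
        + ∑ p, (μ x p * vfd Y₁ (pd p (fun y => Y₂ y i)) x
            + pd p (fun y => Y₂ y i) x * vfd Y₁ (fun y => μ y p) x) := by
    have geq : gen μ σ (fun y => Y₂ y i) = (fun z =>
        1/2 * ∑ p, ∑ q, (∑ α, σ z p α * σ z q α) * pd p (pd q (fun y => Y₂ y i)) z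
          + ∑ p, μ z p * pd p (fun y => Y₂ y i) z) := rfl
    have dPP : ∀ p q, DifferentiableAt ℝ
        (fun z => (∑ α, σ z p α * σ z q α) * pd p (pd q (fun y => Y₂ y i)) z) x := fun p q =>
      ((smA p q).mul (((smY₂ i).pd hM q).pd hM p)).diffAt hM hx
    have dIn : ∀ p, DifferentiableAt ℝ
        (fun z => ∑ q, (∑ α, σ z p α * σ z q α) * pd p (pd q (fun y => Y₂ y i)) z) x := fun p =>
      (Sm.sum Finset.univ _ (fun q _ => (smA p q).mul (((smY₂ i).pd hM q).pd hM p))).diffAt hM hx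
    have dOut : DifferentiableAt ℝ (fun z =>
        ∑ p, ∑ q, (∑ α, σ z p α * σ z q α) * pd p (pd q (fun y => Y₂ y i)) z) x :=
      (Sm.sum Finset.univ _ (fun p _ => Sm.sum Finset.univ _
        (fun q _ => (smA p q).mul (((smY₂ i).pd hM q).pd hM p)))).diffAt hM hx
    have dMu : DifferentiableAt ℝ (fun z => ∑ p, μ z p * pd p (fun y => Y₂ y i) z) x :=
      (Sm.sum Finset.univ _ (fun p _ => (smμ p).mul ((smY₂ i).pd hM p))).diffAt hM hx
    have inner : ∀ p, vfd Y₁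
        (fun z => ∑ q, (∑ α, σ z p α * σ z q α) * pd p (pd q (fun y => Y₂ y i)) z) x
        = ∑ q, ((∑ α, σ x p α * σ x q α) * vfd Y₁ (pd p (pd q (fun y => Y₂ y i))) x
          + pd p (pd q (fun y => Y₂ y i)) x
            * (∑ α, (σ x p α * vfd Y₁ (fun y => σ y q α) x
                + σ x q α * vfd Y₁ (fun y => σ y p α) x))) := by
      intro p
      rw [vfd_sum Finset.univ _ (fun q _ => dPP p q)]
      refine Finset.sum_congr rfl fun q _ => ?_
      rw [vfd_mul ((smA p q).diffAt hM hx) ((((smY₂ i).pd hM q).pd hM p).diffAt hM hx),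
        vfd_sum Finset.univ _ (fun α _ => ((smσ p α).mul (smσ q α)).diffAt hM hx),
        Finset.sum_congr rfl (fun α (_ : α ∈ Finset.univ) =>
          vfd_mul (Y := Y₁) ((smσ p α).diffAt hM hx) ((smσ q α).diffAt hM hx))]
    rw [geq, vfd_add ((dOut.const_mul (1/2) : DifferentiableAt ℝ _ x)) dMu,
      vfd_const_mul (1/2) dOut, vfd_sum Finset.univ _ (fun p _ => dIn p),
      Finset.sum_congr rfl (fun p (_ : p ∈ Finset.univ) => inner p),
      vfd_sum Finset.univ _ (fun p _ => ((smμ p).mul ((smY₂ i).pd hM p)).diffAt hM hx),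
      Finset.sum_congr rfl (fun p (_ : p ∈ Finset.univ) =>
        vfd_mul (Y := Y₁) ((smμ p).diffAt hM hx) (((smY₂ i).pd hM p).diffAt hM hx))]
  
  have genexp₁ : vfd Y₂ (gen μ σ (fun y => Y₁ y i)) x
      = 1/2 * ∑ p, ∑ q, ((∑ α, σ x p α * σ x q α) * vfd Y₂ (pd p (pd q (fun y => Y₁ y i))) x
          + pd p (pd q (fun y => Y₁ y i)) x
            * (∑ α, (σ x p α * vfd Y₂ (fun y => σ y q α) x
                + σ x q α * vfd Y₂ (fun y => σ y p α) x)))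
        + ∑ p, (μ x p * vfd Y₂ (pd p (fun y => Y₁ y i)) x
            + pd p (fun y => Y₁ y i) x * vfd Y₂ (fun y => μ y p) x) := by
    have geq : gen μ σ (fun y => Y₁ y i) = (fun z =>
        1/2 * ∑ p, ∑ q, (∑ α, σ z p α * σ z q α) * pd p (pd q (fun y => Y₁ y i)) z
          + ∑ p, μ z p * pd p (fun y => Y₁ y i) z) := rfl
    have dPP : ∀ p q, DifferentiableAt ℝ
        (fun z => (∑ α, σ z p α * σ z q α) * pd p (pd q (fun y => Y₁ y i)) z) x := fun p q =>
      ((smA p q).mul (((smY₁ i).pd hM q).pd hM p)).diffAt hM hx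
    have dIn : ∀ p, DifferentiableAt ℝ
        (fun z => ∑ q, (∑ α, σ z p α * σ z q α) * pd p (pd q (fun y => Y₁ y i)) z) x := fun p =>
      (Sm.sum Finset.univ _ (fun q _ => (smA p q).mul (((smY₁ i).pd hM q).pd hM p))).diffAt hM hx
    have dOut : DifferentiableAt ℝ (fun z =>
        ∑ p, ∑ q, (∑ α, σ z p α * σ z q α) * pd p (pd q (fun y => Y₁ y i)) z) x :=
      (Sm.sum Finset.univ _ (fun p _ => Sm.sum Finset.univ _
        (fun q _ => (smA p q).mul (((smY₁ i).pd hM q).pd hM p)))).diffAt hM hx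
    have dMu : DifferentiableAt ℝ (fun z => ∑ p, μ z p * pd p (fun y => Y₁ y i) z) x :=
      (Sm.sum Finset.univ _ (fun p _ => (smμ p).mul ((smY₁ i).pd hM p))).diffAt hM hx
    have inner : ∀ p, vfd Y₂
        (fun z => ∑ q, (∑ α, σ z p α * σ z q α) * pd p (pd q (fun y => Y₁ y i)) z) x
        = ∑ q, ((∑ α, σ x p α * σ x q α) * vfd Y₂ (pd p (pd q (fun y => Y₁ y i))) x
          + pd p (pd q (fun y => Y₁ y i)) x
            * (∑ α, (σ x p α * vfd Y₂ (fun y => σ y q α) x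
                + σ x q α * vfd Y₂ (fun y => σ y p α) x))) := by
      intro p
      rw [vfd_sum Finset.univ _ (fun q _ => dPP p q)]
      refine Finset.sum_congr rfl fun q _ => ?_
      rw [vfd_mul ((smA p q).diffAt hM hx) ((((smY₁ i).pd hM q).pd hM p).diffAt hM hx),
        vfd_sum Finset.univ _ (fun α _ => ((smσ p α).mul (smσ q α)).diffAt hM hx),
        Finset.sum_congr rfl (fun α (_ : α ∈ Finset.univ) =>
          vfd_mul (Y := Y₂) ((smσ p α).diffAt hM hx) ((smσ q α).diffAt hM hx))]
    rw [geq, vfd_add ((dOut.const_mul (1/2) : DifferentiableAt ℝ _ x)) dMu,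
      vfd_const_mul (1/2) dOut, vfd_sum Finset.univ _ (fun p _ => dIn p),
      Finset.sum_congr rfl (fun p (_ : p ∈ Finset.univ) => inner p),
      vfd_sum Finset.univ _ (fun p _ => ((smμ p).mul ((smY₁ i).pd hM p)).diffAt hM hx),
      Finset.sum_congr rfl (fun p (_ : p ∈ Finset.univ) =>
        vfd_mul (Y := Y₂) ((smμ p).diffAt hM hx) (((smY₁ i).pd hM p).diffAt hM hx))]
  -- pd q (brY · i) at any z ∈ M
  have pdbrz : ∀ z ∈ M, ∀ q, pd q (fun y => brY Y₁ Y₂ y i) z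
      = (∑ k, (Y₁ z k * pd q (pd k (fun y => Y₂ y i)) z
            + pd k (fun y => Y₂ y i) z * pd q (fun y => Y₁ y k) z))
        - ∑ k, (Y₂ z k * pd q (pd k (fun y => Y₁ y i)) z
            + pd k (fun y => Y₁ y i) z * pd q (fun y => Y₂ y k) z) := by
    intro z hz q
    have hbr : (fun y => brY Y₁ Y₂ y i)
        = (fun y => (∑ k, Y₁ y k * pd k (fun y' => Y₂ y' i) y)
            - ∑ k, Y₂ y k * pd k (fun y' => Y₁ y' i) y) := rfl
    rw [hbr]
    have d1 : DifferentiableAt ℝ (fun y => ∑ k, Y₁ y k * pd k (fun y' => Y₂ y' i) y) z :=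
      (Sm.sum Finset.univ _ (fun k _ => (smY₁ k).mul ((smY₂ i).pd hM k))).diffAt hM hz
    have d2 : DifferentiableAt ℝ (fun y => ∑ k, Y₂ y k * pd k (fun y' => Y₁ y' i) y) z :=
      (Sm.sum Finset.univ _ (fun k _ => (smY₂ k).mul ((smY₁ i).pd hM k))).diffAt hM hz
    rw [pd_sub d1 d2,
      pd_sum Finset.univ _ (fun k _ => ((smY₁ k).mul ((smY₂ i).pd hM k)).diffAt hM hz),
      pd_sum Finset.univ _ (fun k _ => ((smY₂ k).mul ((smY₁ i).pd hM k)).diffAt hM hz),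
      Finset.sum_congr rfl (fun k (_ : k ∈ Finset.univ) =>
        pd_mul ((smY₁ k).diffAt hM hz) (((smY₂ i).pd hM k).diffAt hM hz) q),
      Finset.sum_congr rfl (fun k (_ : k ∈ Finset.univ) =>
        pd_mul ((smY₂ k).diffAt hM hz) (((smY₁ i).pd hM k).diffAt hM hz) q)]
  -- pd p (pd q (brY · i)) at x
  have pdpdbr : ∀ p q, pd p (pd q (fun y => brY Y₁ Y₂ y i)) x
      = (∑ k, ((Y₁ x k * pd p (pd q (pd k (fun y => Y₂ y i))) x
            + pd q (pd k (fun y => Y₂ y i)) x * pd p (fun y => Y₁ y k) x)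
          + (pd k (fun y => Y₂ y i) x * pd p (pd q (fun y => Y₁ y k)) x
            + pd q (fun y => Y₁ y k) x * pd p (pd k (fun y => Y₂ y i)) x)))
        - ∑ k, ((Y₂ x k * pd p (pd q (pd k (fun y => Y₁ y i))) x
            + pd q (pd k (fun y => Y₁ y i)) x * pd p (fun y => Y₂ y k) x)
          + (pd k (fun y => Y₁ y i) x * pd p (pd q (fun y => Y₂ y k)) x
            + pd q (fun y => Y₂ y k) x * pd p (pd k (fun y => Y₁ y i)) x)) := by
    intro p q
    rw [pd_congr hM hx (fun z hz => pdbrz z hz q) p]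
    have dk2 : ∀ k, DifferentiableAt ℝ (fun z => Y₁ z k * pd q (pd k (fun y => Y₂ y i)) z
        + pd k (fun y => Y₂ y i) z * pd q (fun y => Y₁ y k) z) x := fun k =>
      (((smY₁ k).mul (((smY₂ i).pd hM k).pd hM q)).add
        (((smY₂ i).pd hM k).mul ((smY₁ k).pd hM q))).diffAt hM hx
    have dk1 : ∀ k, DifferentiableAt ℝ (fun z => Y₂ z k * pd q (pd k (fun y => Y₁ y i)) z
        + pd k (fun y => Y₁ y i) z * pd q (fun y => Y₂ y k) z) x := fun k =>
      (((smY₂ k).mul (((smY₁ i).pd hM k).pd hM q)).add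
        (((smY₁ i).pd hM k).mul ((smY₂ k).pd hM q))).diffAt hM hx
    rw [pd_sub ((Sm.sum Finset.univ _ (fun k _ => ((smY₁ k).mul (((smY₂ i).pd hM k).pd hM q)).add
          (((smY₂ i).pd hM k).mul ((smY₁ k).pd hM q)))).diffAt hM hx)
        ((Sm.sum Finset.univ _ (fun k _ => ((smY₂ k).mul (((smY₁ i).pd hM k).pd hM q)).add
          (((smY₁ i).pd hM k).mul ((smY₂ k).pd hM q)))).diffAt hM hx),
      pd_sum Finset.univ _ (fun k _ => dk2 k), pd_sum Finset.univ _ (fun k _ => dk1 k)]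
    refine congrArg₂ (· - ·) (Finset.sum_congr rfl fun k _ => ?_)
      (Finset.sum_congr rfl fun k _ => ?_)
    · rw [pd_add (((smY₁ k).mul (((smY₂ i).pd hM k).pd hM q)).diffAt hM hx)
          ((((smY₂ i).pd hM k).mul ((smY₁ k).pd hM q)).diffAt hM hx),
        pd_mul ((smY₁ k).diffAt hM hx) ((((smY₂ i).pd hM k).pd hM q).diffAt hM hx),
        pd_mul ((((smY₂ i).pd hM k).diffAt hM hx)) (((smY₁ k).pd hM q).diffAt hM hx)]
    · rw [pd_add (((smY₂ k).mul (((smY₁ i).pd hM k).pd hM q)).diffAt hM hx)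
          ((((smY₁ i).pd hM k).mul ((smY₂ k).pd hM q)).diffAt hM hx),
        pd_mul ((smY₂ k).diffAt hM hx) ((((smY₁ i).pd hM k).pd hM q).diffAt hM hx),
        pd_mul ((((smY₁ i).pd hM k).diffAt hM hx)) (((smY₂ k).pd hM q).diffAt hM hx)]
  -- gen of the bracket
  have genbr : gen μ σ (fun y => brY Y₁ Y₂ y i) x
      = 1/2 * ∑ p, ∑ q, (∑ α, σ x p α * σ x q α)
          * ((∑ k, ((Y₁ x k * pd p (pd q (pd k (fun y => Y₂ y i))) x
                + pd q (pd k (fun y => Y₂ y i)) x * pd p (fun y => Y₁ y k) x)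
              + (pd k (fun y => Y₂ y i) x * pd p (pd q (fun y => Y₁ y k)) x
                + pd q (fun y => Y₁ y k) x * pd p (pd k (fun y => Y₂ y i)) x)))
            - ∑ k, ((Y₂ x k * pd p (pd q (pd k (fun y => Y₁ y i))) x
                + pd q (pd k (fun y => Y₁ y i)) x * pd p (fun y => Y₂ y k) x)
              + (pd k (fun y => Y₁ y i) x * pd p (pd q (fun y => Y₂ y k)) x
                + pd q (fun y => Y₂ y k) x * pd p (pd k (fun y => Y₁ y i)) x)))
        + ∑ p, μ x p
          * ((∑ k, (Y₁ x k * pd p (pd k (fun y => Y₂ y i)) x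
                + pd k (fun y => Y₂ y i) x * pd p (fun y => Y₁ y k) x))
            - ∑ k, (Y₂ x k * pd p (pd k (fun y => Y₁ y i)) x
                + pd k (fun y => Y₁ y i) x * pd p (fun y => Y₂ y k) x)) := by
    show 1/2 * (∑ p, ∑ q, (∑ α, σ x p α * σ x q α) * pd p (pd q (fun y => brY Y₁ Y₂ y i)) x)
        + ∑ p, μ x p * pd p (fun y => brY Y₁ Y₂ y i) x = _
    refine congrArg₂ (· + ·) (congrArg (fun t => (1/2 : ℝ) * t)
        (Finset.sum_congr rfl fun p _ => Finset.sum_congr rfl fun q _ => ?_))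
      (Finset.sum_congr rfl fun p _ => ?_)
    · rw [pdpdbr p q]
    · rw [pdbrz x hx p]
  rw [vfd_bracket hM hx smY₁ smY₂ (smμ i), exp₂, exp₁, genexp₂, genexp₁, genbr]
  simp only [brH, brTau]
  refine alg1 (fun j β => σ x j β) (fun p q => ∑ α, σ x p α * σ x q α)
    (Y₁ x) (Y₂ x) (μ x)
    (fun a b => pd a (fun y => Y₁ y b) x) (fun a b => pd a (fun y => Y₂ y b) x)
    (fun p q b => pd p (pd q (fun y => Y₁ y b)) x)
    (fun p q b => pd p (pd q (fun y => Y₂ y b)) x)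
    (fun p q k => pd p (pd q (pd k (fun y => Y₁ y i))) x)
    (fun p q k => pd p (pd q (pd k (fun y => Y₂ y i))) x)
    (C₁ x) (C₂ x) (H₁ x) (H₂ x)
    (fun β => vfd Y₂ (fun y => H₁ y β) x) (fun β => vfd Y₁ (fun y => H₂ y β) x)
    (fun q γ => vfd Y₁ (fun y => σ y q γ) x) (fun q γ => vfd Y₂ (fun y => σ y q γ) x)
    (fun p => vfd Y₁ (fun y => μ y p) x) (fun p => vfd Y₂ (fun y => μ y p) x)
    (fun p => vfd Y₂ (pd p (fun y => Y₁ y i)) x)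
    (fun p => vfd Y₁ (pd p (fun y => Y₂ y i)) x)
    (fun p q => vfd Y₂ (pd p (pd q (fun y => Y₁ y i))) x)
    (fun p q => vfd Y₁ (pd p (pd q (fun y => Y₂ y i))) x)
    (τ₁ x) (τ₂ x) (vfd Y₂ τ₁ x) (vfd Y₁ τ₂ x) i
    (fun p q => rfl) (fun q γ => sol₁ x hx q γ) (fun q γ => sol₂ x hx q γ)
    (fun p => sol1₁ x hx p) (fun p => sol1₂ x hx p)
    (fun p => Finset.sum_congr rfl fun k _ => by rw [pd_comm hM (smY₁ i) hx k p])
    (fun p => Finset.sum_congr rfl fun k _ => by rw [pd_comm hM (smY₂ i) hx k p])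
    (fun p q => Finset.sum_congr rfl fun k _ => by rw [pd_comm3 hM (smY₁ i) hx k p q])
    (fun p q => Finset.sum_congr rfl fun k _ => by rw [pd_comm3 hM (smY₂ i) hx k p q])
    (fun p q b => pd_comm hM (smY₁ b) hx p q)
    (fun p q b => pd_comm hM (smY₂ b) hx p q)
    (fun u v => by have h := congrFun (congrFun (hC₁ x hx) v) u; simpa using h)
    (fun u v => by have h := congrFun (congrFun (hC₂ x hx) v) u; simpa using h)

lemma brC_anti (hM : IsOpen M)
    (hC₁ : ∀ x ∈ M, (C₁ x)ᵀ = -(C₁ x)) (hC₂ : ∀ x ∈ M, (C₂ x)ᵀ = -(C₂ x))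
    (hx : x ∈ M) : (brC Y₁ Y₂ C₁ C₂ x)ᵀ = -(brC Y₁ Y₂ C₁ C₂ x) := by
  have hc₁ : ∀ z ∈ M, ∀ u v, C₁ z u v = -C₁ z v u := fun z hz u v => by
    have h := congrFun (congrFun (hC₁ z hz) v) u; simpa using h
  have hc₂ : ∀ z ∈ M, ∀ u v, C₂ z u v = -C₂ z v u := fun z hz u v => by
    have h := congrFun (congrFun (hC₂ z hz) v) u; simpa using h
  ext a b
  simp only [Matrix.transpose_apply, Matrix.neg_apply, brC, Matrix.of_apply]
  have e2 : vfd Y₁ (fun y => C₂ y b a) x = -vfd Y₁ (fun y => C₂ y a b) x := by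
    rw [vfd_congr hM hx (fun z hz => hc₂ z hz b a), vfd_neg]
  have e1 : vfd Y₂ (fun y => C₁ y b a) x = -vfd Y₂ (fun y => C₁ y a b) x := by
    rw [vfd_congr hM hx (fun z hz => hc₁ z hz b a), vfd_neg]
  have m1 : (C₁ x * C₂ x) b a = (C₂ x * C₁ x) a b := by
    simp only [Matrix.mul_apply]
    exact Finset.sum_congr rfl fun c _ => by
      rw [hc₁ x hx b c, hc₂ x hx c a]; ring
  have m2 : (C₂ x * C₁ x) b a = (C₁ x * C₂ x) a b := by
    simp only [Matrix.mul_apply]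
    exact Finset.sum_congr rfl fun c _ => by
      rw [hc₂ x hx b c, hc₁ x hx c a]; ring
  rw [e1, e2, m1, m2]; ring


end glue

set_option maxHeartbeats 1000000 in
/-- The commutator of two general infinitesimal symmetries of the SDE `(μ,σ)` is again an
infinitesimal symmetry of `(μ,σ)` (in particular its `C`-component is antisymmetric). -/
theorem statement7 {n m : ℕ} (M : Set (Fin n → ℝ)) (hM : IsOpen M)
    (μ : (Fin n → ℝ) → Fin n → ℝ) (σ : (Fin n → ℝ) → Matrix (Fin n) (Fin m) ℝ)
    (hμ : SmoothVec M μ) (hσ : SmoothMat M σ)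
    (Y₁ Y₂ : (Fin n → ℝ) → Fin n → ℝ)
    (C₁ C₂ : (Fin n → ℝ) → Matrix (Fin m) (Fin m) ℝ)
    (τ₁ τ₂ : (Fin n → ℝ) → ℝ) (H₁ H₂ : (Fin n → ℝ) → Fin m → ℝ)
    (hY₁ : SmoothVec M Y₁) (hY₂ : SmoothVec M Y₂)
    (hC₁s : SmoothMat M C₁) (hC₂s : SmoothMat M C₂)
    (hτ₁ : ContDiffOn ℝ (⊤ : ℕ∞) τ₁ M) (hτ₂ : ContDiffOn ℝ (⊤ : ℕ∞) τ₂ M)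
    (hH₁ : SmoothVec M H₁) (hH₂ : SmoothVec M H₂)
    (hC₁ : ∀ x ∈ M, (C₁ x)ᵀ = -(C₁ x)) (hC₂ : ∀ x ∈ M, (C₂ x)ᵀ = -(C₂ x))
    (hsym₁ : DetEqs M μ σ Y₁ C₁ τ₁ H₁) (hsym₂ : DetEqs M μ σ Y₂ C₂ τ₂ H₂) :
    DetEqs M μ σ (brY Y₁ Y₂) (brC Y₁ Y₂ C₁ C₂) (brTau Y₁ Y₂ τ₁ τ₂)
        (brH Y₁ Y₂ C₁ C₂ τ₁ τ₂ H₁ H₂) ∧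
      ∀ x ∈ M, (brC Y₁ Y₂ C₁ C₂ x)ᵀ = -(brC Y₁ Y₂ C₁ C₂ x) := by
  refine ⟨⟨fun x hx i => ?_, fun x hx i α => ?_⟩, fun x hx => ?_⟩
  · exact det1_br hM hμ hσ hY₁ hY₂ hC₁s hC₂s hτ₁ hτ₂ hH₁ hH₂ hC₁ hC₂
      hsym₁.1 hsym₂.1 hsym₁.2 hsym₂.2 hx i
  · exact det2_br hM hσ hY₁ hY₂ hC₁s hC₂s hτ₁ hτ₂ hsym₁.2 hsym₂.2 hx i α
  · exact brC_anti hM hC₁ hC₂ hx
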